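/- Under the stated semigroup-family setting, let 1 ≤ k ≤ p and assume σ_{k−1} < σ_k < σ_{k+1} (with the conventions σ₀ = −∞ and, if k = r, σ_{k+1} = σ_{r+1}). Then lim_{τ→∞} λ_k^τ · e^{σ_k τ} = ⟨η_k, q_k⟩². -/

import Mathlib

/-!
`λ_k e^{σ_k τ}` is squeezed between an upper and a lower bound, both obtained from the
Courant–Fischer principle for the compression of `T_τ` to `Φ`. Gram–Schmidt gives
`span{q₁, …, q_j} = span{Pη₁, …, Pη_j}` with `P = P_Φ`.

Upper bound: some unit `u ∈ Φ` orthogonal to `q₁, …, q_{k-1}` has `λ_k ≤ ⟨u, T u⟩`. Such a `u` is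
orthogonal to `η₁, …, η_{k-1}` and satisfies `⟨η_k, u⟩ = ⟨η_k, q_k⟩⟨q_k, u⟩`, so expanding along the
`η_i` gives `λ_k ≤ e^{-σ_k τ} ⟨η_k, q_k⟩² + e^{-σ_{k+1} τ}`.

Lower bound: some unit `u ∈ span{q₁, …, q_k}` has `⟨u, T u⟩ ≤ λ_k`. Write `u = v + a q_k` with
`v ∈ span{Pη₁, …, Pη_{k-1}}`. On this finite-dimensional space `‖v‖` is controlled by the
components `⟨η_i, u⟩`, `i < k`, and these components are weighted by `e^{(σ_k - σ_i) τ} ≥ e^{δ τ}`.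
Completing the square in `‖v‖` gives `λ_k e^{σ_k τ} ≥ ⟨η_k, q_k⟩² - C e^{-δ τ}`.
-/

open scoped RealInnerProductSpace ENNReal
open Submodule Filter

noncomputable section

variable {H : Type*} [NormedAddCommGroup H] [InnerProductSpace ℝ H] [CompleteSpace H]

/-- Orthogonal projection onto `U`, as an operator `H → H` (defined to be `0` in the
degenerate case where `U` admits no orthogonal projection). -/
noncomputable def proj (U : Submodule ℝ H) : H →L[ℝ] H := by
  classical
  exact if h : HasOrthogonalProjection U then
    (haveI := h; U.subtypeL ∘L orthogonalProjection U)
  else 0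

/-- Squared Hilbert–Schmidt norm of an operator, computed in a fixed Hilbert basis of `H`. -/
noncomputable def hsNormSq (A : H →L[ℝ] H) : ℝ≥0∞ :=
  ∑' i : (exists_hilbertBasis ℝ H).choose,
    (‖A ((exists_hilbertBasis ℝ H).choose_spec.choose i)‖₊ : ℝ≥0∞) ^ 2

/-- Hilbert–Schmidt (Frobenius) norm of an operator. -/
noncomputable def hsNorm (A : H →L[ℝ] H) : ℝ := Real.sqrt (hsNormSq A).toReal

/-- Projection distance `d_F(U, W) = ‖P_{Wᗮ} P_U‖_F`. -/
noncomputable def dF (U W : Submodule ℝ H) : ℝ := hsNorm ((proj Wᗮ) ∘L (proj U))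

/-- Gap distance `d₂(U, W) = ‖P_{Wᗮ} P_U‖₂`. -/
noncomputable def d2 (U W : Submodule ℝ H) : ℝ := ‖(proj Wᗮ) ∘L (proj U)‖

/-- A Ritz decomposition of (the compression to `Φ` of) `T`: an orthonormal basis
`γ₁, …, γ_n` of the `n`-dimensional subspace `Φ` with `P_Φ T γ_i = λ_i γ_i` and
`λ₁ ≥ λ₂ ≥ ⋯ ≥ λ_n` (so the `λ_i` are the Ritz values of `T` on `Φ`, in decreasing
order with multiplicity). -/
def RitzData {H : Type*} [NormedAddCommGroup H] [InnerProductSpace ℝ H] [CompleteSpace H]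
    (Φ : Submodule ℝ H) (T : H →L[ℝ] H) (n : ℕ) (lam : ℕ → ℝ) (γ : ℕ → H) : Prop :=
  (∀ i ∈ Set.Icc 1 n, ∀ j ∈ Set.Icc 1 n, ⟪γ i, γ j⟫ = if i = j then (1 : ℝ) else 0) ∧
  span ℝ (γ '' Set.Icc 1 n) = Φ ∧
  (∀ i ∈ Set.Icc 1 n, proj Φ (T (γ i)) = lam i • γ i) ∧
  (∀ i ∈ Set.Icc 1 n, ∀ j ∈ Set.Icc 1 n, i ≤ j → lam j ≤ lam i)

section

variable {E ι : Type*} [NormedAddCommGroup E] [InnerProductSpace ℝ E]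

lemma proj_eq_starProjection (U : Submodule ℝ E) [HasOrthogonalProjection U] :
    proj U = U.starProjection := by
  rw [proj, dif_pos ‹_›]; rfl

lemma proj_apply_mem (U : Submodule ℝ E) [HasOrthogonalProjection U] (x : E) : proj U x ∈ U := by
  rw [proj_eq_starProjection]
  exact U.starProjection_apply_mem x

lemma inner_proj_left_of_mem {U : Submodule ℝ E} [HasOrthogonalProjection U] (x : E) {u : E}
    (hu : u ∈ U) : ⟪proj U x, u⟫ = ⟪x, u⟫ := by
  rw [proj_eq_starProjection, U.inner_starProjection_left_eq_right,
    Submodule.starProjection_eq_self_iff.2 hu]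

section OrthonormalFinset

lemma mem_orthogonal_span_of_forall_inner_eq_zero {S : Set E} {w : E}
    (h : ∀ x ∈ S, ⟪x, w⟫ = 0) : w ∈ (span ℝ S)ᗮ := by
  have hle : span ℝ S ≤ (ℝ ∙ w)ᗮ := span_le.2 fun x hx =>
    Submodule.mem_orthogonal_singleton_iff_inner_left.2 (h x hx)
  exact fun x hx => Submodule.mem_orthogonal_singleton_iff_inner_left.1 (hle hx)

lemma orthonormal_Icc_of_inner_eq_ite {v : ℕ → E} {a b : ℕ}
    (hv : ∀ i ∈ Set.Icc a b, ∀ j ∈ Set.Icc a b, ⟪v i, v j⟫ = if i = j then (1 : ℝ) else 0) :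
    Orthonormal ℝ (fun i : Finset.Icc a b => v i) :=
  orthonormal_iff_ite.2 fun i j => by
    rw [hv i (Finset.mem_Icc.1 i.2) j (Finset.mem_Icc.1 j.2)]; simp only [Subtype.coe_inj]

variable {v : ι → E} {s : Finset ι}

lemma inner_sum_smul_of_orthonormal (hv : Orthonormal ℝ (fun i : s => v i)) (g : ι → ℝ)
    {i : ι} (hi : i ∈ s) : ⟪v i, ∑ j ∈ s, g j • v j⟫ = g i := by
  rw [← Finset.sum_coe_sort s]
  exact hv.inner_right_fintype (fun j : s => g j) ⟨i, hi⟩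

lemma inner_sum_smul_sum_smul_of_orthonormal (hv : Orthonormal ℝ (fun i : s => v i))
    (g h : ι → ℝ) : ⟪∑ j ∈ s, g j • v j, ∑ j ∈ s, h j • v j⟫ = ∑ j ∈ s, g j * h j := by
  rw [sum_inner]
  exact Finset.sum_congr rfl fun j hj => by
    rw [real_inner_smul_left, inner_sum_smul_of_orthonormal hv h hj]

lemma norm_sum_smul_sq_of_orthonormal (hv : Orthonormal ℝ (fun i : s => v i)) (g : ι → ℝ) :
    ‖∑ j ∈ s, g j • v j‖ ^ 2 = ∑ j ∈ s, g j ^ 2 := by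
  rw [← real_inner_self_eq_norm_sq, inner_sum_smul_sum_smul_of_orthonormal hv]
  simp only [sq]

lemma sub_sum_inner_smul_mem_orthogonal (hv : Orthonormal ℝ (fun i : s => v i)) (u : E) :
    u - ∑ j ∈ s, ⟪v j, u⟫ • v j ∈ (span ℝ (v '' s))ᗮ := by
  refine mem_orthogonal_span_of_forall_inner_eq_zero ?_
  rintro _ ⟨i, hi, rfl⟩
  rw [inner_sub_right, inner_sum_smul_of_orthonormal hv _ hi, sub_self]

lemma norm_sq_eq_sum_inner_sq_add (hv : Orthonormal ℝ (fun i : s => v i)) (u : E) :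
    ‖u‖ ^ 2 = ∑ j ∈ s, ⟪v j, u⟫ ^ 2 + ‖u - ∑ j ∈ s, ⟪v j, u⟫ • v j‖ ^ 2 := by
  set P := ∑ j ∈ s, ⟪v j, u⟫ • v j
  have hP : P ∈ span ℝ (v '' s) :=
    Submodule.sum_mem _ fun j hj => Submodule.smul_mem _ _ (subset_span ⟨j, hj, rfl⟩)
  have horth : ⟪P, u - P⟫ = 0 :=
    Submodule.inner_right_of_mem_orthogonal hP (sub_sum_inner_smul_mem_orthogonal hv u)
  have := norm_add_sq_eq_norm_sq_add_norm_sq_real horth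
  rw [add_sub_cancel] at this
  rw [sq, sq, this, ← sq, ← sq, norm_sum_smul_sq_of_orthonormal hv]

lemma eq_sum_inner_smul_of_mem_span (hv : Orthonormal ℝ (fun i : s => v i)) {u : E}
    (hu : u ∈ span ℝ (v '' s)) : u = ∑ j ∈ s, ⟪v j, u⟫ • v j := by
  have hmem : u - ∑ j ∈ s, ⟪v j, u⟫ • v j ∈ span ℝ (v '' s) :=
    Submodule.sub_mem _ hu
      (Submodule.sum_mem _ fun j hj => Submodule.smul_mem _ _ (subset_span ⟨j, hj, rfl⟩))
  have := Submodule.inner_right_of_mem_orthogonal hmem (sub_sum_inner_smul_mem_orthogonal hv u)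
  rwa [inner_self_eq_zero, sub_eq_zero] at this

lemma finrank_span_eq_card_of_orthonormal (hv : Orthonormal ℝ (fun i : s => v i)) :
    Module.finrank ℝ (span ℝ (v '' s)) = s.card := by
  have := finrank_span_eq_card hv.linearIndependent
  rwa [Fintype.card_coe, show Set.range (fun i : s => v i) = v '' s by ext; simp] at this

lemma orthonormal_insert [DecidableEq ι] {a : ι}
    (hs : Orthonormal ℝ (fun i : s => v i)) (ha : ‖v a‖ = 1) (hperp : ∀ i ∈ s, ⟪v i, v a⟫ = 0) :
    Orthonormal ℝ (fun i : (insert a s : Finset ι) => v i) := by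
  refine ⟨fun ⟨i, hi⟩ => ?_, fun ⟨i, hi⟩ ⟨l, hl⟩ hne => ?_⟩
  · rcases Finset.mem_insert.1 hi with rfl | hi
    exacts [ha, hs.1 ⟨i, hi⟩]
  · have hne' : i ≠ l := fun h => hne (Subtype.ext h)
    change ⟪v i, v l⟫ = 0
    rcases Finset.mem_insert.1 hi with rfl | his <;> rcases Finset.mem_insert.1 hl with rfl | hls
    · exact absurd rfl hne'
    · rw [real_inner_comm]; exact hperp l hls
    · exact hperp i his
    · exact hs.2 (show (⟨i, his⟩ : s) ≠ ⟨l, hls⟩ from fun h => hne' (congrArg Subtype.val h))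

lemma mem_orthogonal_span_of_orthonormal_insert [DecidableEq ι] {a : ι}
    (hv : Orthonormal ℝ (fun i : (insert a s : Finset ι) => v i)) (ha : a ∉ s) :
    v a ∈ (span ℝ (v '' s))ᗮ :=
  mem_orthogonal_span_of_forall_inner_eq_zero fun _ ⟨l, hl, h⟩ => h ▸
    hv.2 (show (⟨l, Finset.mem_insert_of_mem hl⟩ : (insert a s : Finset ι)) ≠
      ⟨a, Finset.mem_insert_self a s⟩ from fun h => ha (Subtype.mk.inj h ▸ hl))

lemma sub_inner_smul_mem_span_of_orthonormal_insert [DecidableEq ι] {a : ι}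
    (hv : Orthonormal ℝ (fun i : (insert a s : Finset ι) => v i)) (ha : a ∉ s) {u : E}
    (hu : u ∈ span ℝ (v '' ↑(insert a s))) : u - ⟪v a, u⟫ • v a ∈ span ℝ (v '' s) := by
  have hexp := eq_sum_inner_smul_of_mem_span hv hu
  rw [Finset.sum_insert ha] at hexp
  rw [sub_eq_of_eq_add' hexp]
  exact Submodule.sum_mem _ fun l hl => Submodule.smul_mem _ _ (subset_span ⟨l, hl, rfl⟩)

lemma norm_sq_eq_inner_sq_add_of_orthonormal_insert [DecidableEq ι] {a : ι}
    (hv : Orthonormal ℝ (fun i : (insert a s : Finset ι) => v i)) (ha : a ∉ s) {u : E}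
    (hu : u ∈ span ℝ (v '' ↑(insert a s))) :
    ‖u‖ ^ 2 = ⟪v a, u⟫ ^ 2 + ‖u - ⟪v a, u⟫ • v a‖ ^ 2 := by
  have horth : ⟪⟪v a, u⟫ • v a, u - ⟪v a, u⟫ • v a⟫ = 0 := by
    rw [real_inner_comm]
    exact Submodule.inner_right_of_mem_orthogonal
      (sub_inner_smul_mem_span_of_orthonormal_insert hv ha hu)
      (Submodule.smul_mem _ _ (mem_orthogonal_span_of_orthonormal_insert hv ha))
  have := norm_add_sq_eq_norm_sq_add_norm_sq_real horth
  rw [add_sub_cancel, norm_smul, hv.1 ⟨a, Finset.mem_insert_self a s⟩, mul_one,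
    Real.norm_eq_abs] at this
  rw [sq, this, ← sq, ← sq, sq_abs]

end OrthonormalFinset

lemma exists_norm_eq_one_forall_inner_eq_zero (V : Submodule ℝ E) [FiniteDimensional ℝ V]
    (S : Finset E) (hS : S.card < Module.finrank ℝ V) :
    ∃ u ∈ V, ‖u‖ = 1 ∧ ∀ x ∈ S, ⟪x, u⟫ = 0 := by
  let L : V →ₗ[ℝ] (S → ℝ) := LinearMap.pi fun x => (innerₛₗ ℝ (x : E)).comp V.subtype
  have hL : LinearMap.ker L ≠ ⊥ := LinearMap.ker_ne_bot_of_finrank_lt (by simpa using hS)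
  obtain ⟨v, hv, hv0⟩ := Submodule.exists_mem_ne_zero_of_ne_bot hL
  have hv0' : (v : E) ≠ 0 := by simpa using hv0
  refine ⟨‖(v : E)‖⁻¹ • (v : E), V.smul_mem _ v.2, norm_smul_inv_norm hv0', fun x hx => ?_⟩
  have := congr_fun (LinearMap.mem_ker.1 hv) ⟨x, hx⟩
  simp only [L, LinearMap.pi_apply, LinearMap.comp_apply, innerₛₗ_apply_apply,
    Submodule.subtype_apply, Pi.zero_apply] at this
  rw [real_inner_smul_right, this, mul_zero]

lemma exists_pos_mul_norm_sq_le_sum_inner_sq (f : ι → E) (s : Finset ι) :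
    ∃ c > 0, ∀ v ∈ span ℝ (f '' s), c * ‖v‖ ^ 2 ≤ ∑ i ∈ s, ⟪f i, v⟫ ^ 2 := by
  classical
  have : FiniteDimensional ℝ (span ℝ (f '' s)) := by
    rw [← Finset.coe_image]; exact FiniteDimensional.span_finset ℝ _
  set V := span ℝ (f '' s)
  let L : V →ₗ[ℝ] EuclideanSpace ℝ s := (WithLp.linearEquiv 2 ℝ (s → ℝ)).symm.toLinearMap ∘ₗ
    LinearMap.pi fun i => (innerₛₗ ℝ (f i)).comp V.subtype
  have hL : ∀ v : V, ‖L v‖ ^ 2 = ∑ i ∈ s, ⟪f i, v⟫ ^ 2 := fun v => by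
    rw [EuclideanSpace.norm_sq_eq, ← Finset.sum_coe_sort s]
    simp [L]
  have hker : LinearMap.ker L = ⊥ := by
    refine (Submodule.eq_bot_iff _).2 fun v hv => Subtype.ext ?_
    have hperp : (v : E) ∈ Vᗮ := mem_orthogonal_span_of_forall_inner_eq_zero <| by
      rintro _ ⟨i, hi, rfl⟩
      simpa [L] using congr_arg (fun x => x.ofLp ⟨i, hi⟩) (LinearMap.mem_ker.1 hv)
    exact inner_self_eq_zero.1 (Submodule.inner_right_of_mem_orthogonal v.2 hperp)
  obtain ⟨K, hK, hLK⟩ := L.exists_antilipschitzWith hker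
  refine ⟨((K : ℝ) ^ 2)⁻¹, by positivity, fun v hv => ?_⟩
  have hle : ‖(⟨v, hv⟩ : V)‖ ≤ K * ‖L ⟨v, hv⟩‖ := by
    simpa using hLK.le_mul_dist ⟨v, hv⟩ 0
  rw [← hL ⟨v, hv⟩, inv_mul_le_iff₀ (by positivity), ← mul_pow]
  exact pow_le_pow_left₀ (norm_nonneg _) hle 2

namespace RitzData

variable [CompleteSpace E] {Φ : Submodule ℝ E} {T : E →L[ℝ] E} {n : ℕ}
  {lam : ℕ → ℝ} {γ : ℕ → E}

lemma orthonormal (h : RitzData Φ T n lam γ) : Orthonormal ℝ (fun i : Finset.Icc 1 n => γ i) :=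
  orthonormal_Icc_of_inner_eq_ite h.1

lemma span_eq (h : RitzData Φ T n lam γ) : span ℝ (γ '' ↑(Finset.Icc 1 n)) = Φ := by
  rw [Finset.coe_Icc]; exact h.2.1

lemma finiteDimensional (h : RitzData Φ T n lam γ) : FiniteDimensional ℝ Φ := by
  classical
  rw [← h.span_eq, ← Finset.coe_image]
  exact FiniteDimensional.span_finset ℝ _

lemma finrank_eq (h : RitzData Φ T n lam γ) : Module.finrank ℝ Φ = n := by
  rw [← h.span_eq, finrank_span_eq_card_of_orthonormal h.orthonormal, Nat.card_Icc,
    Nat.add_sub_cancel]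

lemma norm_sq_eq (h : RitzData Φ T n lam γ) {u : E} (hu : u ∈ Φ) :
    ‖u‖ ^ 2 = ∑ j ∈ Finset.Icc 1 n, ⟪γ j, u⟫ ^ 2 := by
  conv_lhs => rw [eq_sum_inner_smul_of_mem_span (u := u) h.orthonormal (h.span_eq ▸ hu)]
  exact norm_sum_smul_sq_of_orthonormal h.orthonormal _

lemma inner_apply_self_eq (h : RitzData Φ T n lam γ) {u : E} (hu : u ∈ Φ) :
    ⟪u, T u⟫ = ∑ j ∈ Finset.Icc 1 n, lam j * ⟪γ j, u⟫ ^ 2 := by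
  have := h.finiteDimensional
  have hexp := eq_sum_inner_smul_of_mem_span h.orthonormal (h.span_eq ▸ hu)
  have hproj : proj Φ (T u) = ∑ j ∈ Finset.Icc 1 n, (lam j * ⟪γ j, u⟫) • γ j := by
    conv_lhs => rw [hexp]
    simp only [map_sum, map_smul]
    refine Finset.sum_congr rfl fun j hj => ?_
    rw [h.2.2.1 j (Finset.mem_Icc.1 hj), smul_smul, mul_comm]
  rw [real_inner_comm, ← inner_proj_left_of_mem _ hu, hproj, sum_inner]
  refine Finset.sum_congr rfl fun j _ => ?_
  rw [real_inner_smul_left, real_inner_comm, mul_assoc, ← sq]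

lemma exists_le_inner_apply_self (h : RitzData Φ T n lam γ) {k : ℕ} (hk : k ∈ Set.Icc 1 n)
    (S : Finset E) (hS : S.card < k) :
    ∃ u ∈ Φ, ‖u‖ = 1 ∧ (∀ x ∈ S, ⟪x, u⟫ = 0) ∧ lam k ≤ ⟪u, T u⟫ := by
  classical
  have := h.finiteDimensional
  have hcard : (S ∪ (Finset.Icc (k + 1) n).image γ).card < Module.finrank ℝ Φ := by
    have := Finset.card_union_le S ((Finset.Icc (k + 1) n).image γ)
    have := (Finset.Icc (k + 1) n).card_image_le (f := γ)
    rw [Nat.card_Icc] at this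
    rw [h.finrank_eq]
    have := hk.2
    omega
  obtain ⟨u, huΦ, hu1, hperp⟩ := exists_norm_eq_one_forall_inner_eq_zero Φ _ hcard
  refine ⟨u, huΦ, hu1, fun x hx => hperp x (Finset.mem_union_left _ hx), ?_⟩
  rw [h.inner_apply_self_eq huΦ]
  calc lam k = lam k * ‖u‖ ^ 2 := by rw [hu1, one_pow, mul_one]
    _ = ∑ j ∈ Finset.Icc 1 n, lam k * ⟪γ j, u⟫ ^ 2 := by rw [h.norm_sq_eq huΦ, Finset.mul_sum]
    _ ≤ ∑ j ∈ Finset.Icc 1 n, lam j * ⟪γ j, u⟫ ^ 2 := by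
      refine Finset.sum_le_sum fun j hj => ?_
      obtain ⟨hj1, hjn⟩ := Finset.mem_Icc.1 hj
      rcases le_or_gt j k with hjk | hkj
      · exact mul_le_mul_of_nonneg_right (h.2.2.2 j ⟨hj1, hjn⟩ k hk hjk) (sq_nonneg _)
      · have : ⟪γ j, u⟫ = 0 := hperp _ (Finset.mem_union_right _
          (Finset.mem_image_of_mem γ (Finset.mem_Icc.2 ⟨hkj, hjn⟩)))
        simp [this]

lemma exists_inner_apply_self_le (h : RitzData Φ T n lam γ) {k : ℕ} (hk : 1 ≤ k)
    {V : Submodule ℝ E} (hVΦ : V ≤ Φ) (hV : k ≤ Module.finrank ℝ V) :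
    ∃ u ∈ V, ‖u‖ = 1 ∧ ⟪u, T u⟫ ≤ lam k := by
  classical
  have := h.finiteDimensional
  have := Submodule.finiteDimensional_of_le hVΦ
  have hkn : k ≤ n := h.finrank_eq ▸ hV.trans (Submodule.finrank_mono hVΦ)
  have hcard : ((Finset.Ico 1 k).image γ).card < Module.finrank ℝ V := by
    have := (Finset.Ico 1 k).card_image_le (f := γ)
    rw [Nat.card_Ico] at this
    omega
  obtain ⟨u, huV, hu1, hperp⟩ := exists_norm_eq_one_forall_inner_eq_zero V _ hcard
  have huΦ := hVΦ huV
  refine ⟨u, huV, hu1, ?_⟩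
  rw [h.inner_apply_self_eq huΦ]
  calc ∑ j ∈ Finset.Icc 1 n, lam j * ⟪γ j, u⟫ ^ 2
      ≤ ∑ j ∈ Finset.Icc 1 n, lam k * ⟪γ j, u⟫ ^ 2 := by
        refine Finset.sum_le_sum fun j hj => ?_
        obtain ⟨hj1, hjn⟩ := Finset.mem_Icc.1 hj
        rcases lt_or_ge j k with hjk | hkj
        · have : ⟪γ j, u⟫ = 0 :=
            hperp _ (Finset.mem_image_of_mem γ (Finset.mem_Ico.2 ⟨hj1, hjk⟩))
          simp [this]
        · exact mul_le_mul_of_nonneg_right (h.2.2.2 k ⟨hk, hkn⟩ j ⟨hj1, hjn⟩ hkj) (sq_nonneg _)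
    _ = lam k := by rw [← Finset.mul_sum, ← h.norm_sq_eq huΦ, hu1, one_pow, mul_one]

end RitzData

lemma span_singleton_sub_sup_eq {S : Submodule ℝ E} (x : E) {y : E} (hy : y ∈ S) :
    (ℝ ∙ (x - y)) ⊔ S = (ℝ ∙ x) ⊔ S := by
  refine le_antisymm (sup_le ?_ le_sup_right) (sup_le ?_ le_sup_right) <;>
    rw [Submodule.span_singleton_le_iff_mem]
  · exact Submodule.sub_mem _ (Submodule.mem_sup_left (Submodule.mem_span_singleton_self x))
      (Submodule.mem_sup_right hy)
  · simpa using Submodule.add_mem _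
      (Submodule.mem_sup_left (Submodule.mem_span_singleton_self (x - y)))
      (Submodule.mem_sup_right hy)

def gramSchmidtResidual (f q : ℕ → E) (i : ℕ) : E :=
  f i - ∑ l ∈ Finset.Ico 1 i, ⟪q l, f i⟫ • q l

lemma notMem_span_image_Ico {f : ℕ → E} {p : ℕ}
    (hf : LinearIndependent ℝ (fun i : Set.Icc 1 p => f i)) {i : ℕ} (hi : i ∈ Set.Icc 1 p) :
    f i ∉ span ℝ (f '' ↑(Finset.Ico 1 i)) := by
  intro hmem
  refine hf.notMem_span_image (s := {l | l.1 < i}) (x := ⟨i, hi⟩) (lt_irrefl i) ?_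
  refine span_mono ?_ hmem
  rintro _ ⟨l, hl, rfl⟩
  obtain ⟨hl1, hli⟩ := Finset.mem_Ico.1 hl
  exact ⟨⟨l, hl1, hli.le.trans hi.2⟩, hli, rfl⟩

def IsOrthonormalization (f q : ℕ → E) (m : ℕ) : Prop :=
  ∀ i ∈ Set.Icc 1 m, Orthonormal ℝ (fun l : Finset.Ico 1 i => q l) ∧
    span ℝ (q '' ↑(Finset.Ico 1 i)) = span ℝ (f '' ↑(Finset.Ico 1 i))

lemma IsOrthonormalization.mono {f q : ℕ → E} {m m' : ℕ} (h : IsOrthonormalization f q m)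
    (hm : m' ≤ m) : IsOrthonormalization f q m' :=
  fun i hi => h i ⟨hi.1, hi.2.trans hm⟩

lemma isOrthonormalization_of_gramSchmidt {f q : ℕ → E} {p : ℕ}
    (hq : ∀ i ∈ Set.Icc 1 p, q i = ‖gramSchmidtResidual f q i‖⁻¹ • gramSchmidtResidual f q i)
    (hf : LinearIndependent ℝ (fun i : Set.Icc 1 p => f i)) :
    IsOrthonormalization f q (p + 1) := by
  intro i ⟨hi1, hip⟩
  induction i, hi1 using Nat.le_induction with
  | base => exact ⟨⟨fun l => absurd l.2 (by simp), fun l => absurd l.2 (by simp)⟩, by simp⟩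
  | succ i hi1 ih =>
    obtain ⟨hON, hspan⟩ := ih (by omega)
    have hi : i ∈ Set.Icc 1 p := ⟨hi1, by omega⟩
    set r := gramSchmidtResidual f q i
    have hr : r ∈ (span ℝ (q '' ↑(Finset.Ico 1 i)))ᗮ := sub_sum_inner_smul_mem_orthogonal hON (f i)
    have hP : ∑ l ∈ Finset.Ico 1 i, ⟪q l, f i⟫ • q l ∈ span ℝ (q '' ↑(Finset.Ico 1 i)) :=
      Submodule.sum_mem _ fun l hl => Submodule.smul_mem _ _ (subset_span ⟨l, hl, rfl⟩)
    have hr0 : r ≠ 0 := fun h0 => notMem_span_image_Ico hf hi <| by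
      rw [← hspan, sub_eq_zero.1 h0]; exact hP
    have hqi : ‖q i‖ = 1 := by
      rw [hq i hi, norm_smul, norm_inv, norm_norm, inv_mul_cancel₀ (norm_ne_zero_iff.2 hr0)]
    have hqi_perp : q i ∈ (span ℝ (q '' ↑(Finset.Ico 1 i)))ᗮ := by
      rw [hq i hi]; exact Submodule.smul_mem _ _ hr
    have hperp : ∀ l ∈ Finset.Ico 1 i, ⟪q l, q i⟫ = 0 := fun l hl =>
      Submodule.inner_right_of_mem_orthogonal (subset_span (Set.mem_image_of_mem q hl)) hqi_perp
    rw [← Finset.insert_Ico_right_eq_Ico_add_one hi1]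
    refine ⟨orthonormal_insert hON hqi hperp, ?_⟩
    rw [Finset.coe_insert, Set.image_insert_eq, Set.image_insert_eq, span_insert, span_insert,
      ← hspan, hq i hi,
      Submodule.span_singleton_smul_eq (inv_ne_zero (norm_ne_zero_iff.2 hr0)).isUnit]
    exact span_singleton_sub_sup_eq _ hP

lemma sq_sub_mul_le_sq_add {a b M B t : ℝ} (ha : a ^ 2 + t ^ 2 = 1) (ht0 : 0 ≤ t) (ht1 : t ≤ 1)
    (hb : |b| ≤ B * t) : M ^ 2 - (M ^ 2 + 2 * |M| * B) * t ≤ (a * M + b) ^ 2 := by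
  have ha1 : |a| ≤ 1 := abs_le_one_iff_mul_self_le_one.2 (by nlinarith)
  have hcross : |a * M * b| ≤ |M| * (B * t) := by
    rw [abs_mul, abs_mul]
    calc |a| * |M| * |b| ≤ 1 * |M| * (B * t) := by gcongr
      _ = |M| * (B * t) := by ring
  nlinarith [neg_abs_le (a * M * b), sq_nonneg b, mul_le_mul_of_nonneg_left ht1 ht0, sq_nonneg M]

lemma mul_le_mul_sq_add_div {c θ D t : ℝ} (hc : 0 < c) (hθ : 0 < θ) :
    D * t ≤ θ * (c * t ^ 2) + D ^ 2 / (4 * c) / θ := by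
  have h : θ * (c * t ^ 2) + D ^ 2 / (4 * c) / θ - D * t =
      (2 * c * θ * t - D) ^ 2 / (4 * c * θ) := by
    field_simp; ring
  nlinarith [h, show 0 ≤ (2 * c * θ * t - D) ^ 2 / (4 * c * θ) by positivity]

section ProjectedOrthonormalization

variable {U : Submodule ℝ E} [HasOrthogonalProjection U] {x q : ℕ → E}

lemma gramSchmidt_proj {p : ℕ}
    (hq : ∀ i ∈ Set.Icc 1 p,
      q i = ‖proj U (x i) - ∑ l ∈ Finset.Ico 1 i, ⟪q l, x i⟫ • q l‖⁻¹ •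
            (proj U (x i) - ∑ l ∈ Finset.Ico 1 i, ⟪q l, x i⟫ • q l)) :
    ∀ i ∈ Set.Icc 1 p, q i = ‖gramSchmidtResidual (fun i => proj U (x i)) q i‖⁻¹ •
      gramSchmidtResidual (fun i => proj U (x i)) q i := by
  have hmem : ∀ i ∈ Set.Icc 1 p, q i ∈ U := by
    intro i
    induction i using Nat.strong_induction_on with
    | _ i ih =>
      intro hi
      rw [hq i hi]
      refine U.smul_mem _ (U.sub_mem (proj_apply_mem U _) (U.sum_mem fun l hl => U.smul_mem _ ?_))
      obtain ⟨hl1, hli⟩ := Finset.mem_Ico.1 hl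
      exact ih l hli ⟨hl1, hli.le.trans hi.2⟩
  intro i hi
  have hres : gramSchmidtResidual (fun i => proj U (x i)) q i =
      proj U (x i) - ∑ l ∈ Finset.Ico 1 i, ⟪q l, x i⟫ • q l := by
    refine congrArg (proj U (x i) - ·) (Finset.sum_congr rfl fun l hl => ?_)
    obtain ⟨hl1, hli⟩ := Finset.mem_Ico.1 hl
    rw [real_inner_comm, inner_proj_left_of_mem _ (hmem l ⟨hl1, hli.le.trans hi.2⟩),
      real_inner_comm]
  rw [hres]
  exact hq i hi

lemma span_image_proj_le (s : Set ℕ) : span ℝ ((fun i => proj U (x i)) '' s) ≤ U :=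
  span_le.2 fun _ ⟨_, _, h⟩ => h ▸ proj_apply_mem U _

lemma inner_eq_of_forall_inner_eq_zero {k : ℕ} (hk : 1 ≤ k)
    (hq : IsOrthonormalization (fun i => proj U (x i)) q (k + 1)) {u : E} (hu : u ∈ U)
    (hperp : ∀ l ∈ Finset.Ico 1 k, ⟪q l, u⟫ = 0) :
    (∀ i ∈ Finset.Ico 1 k, ⟪x i, u⟫ = 0) ∧ ⟪x k, u⟫ = ⟪x k, q k⟫ * ⟪q k, u⟫ := by
  have hxu : ∀ i, ⟪x i, u⟫ = ⟪proj U (x i), u⟫ := fun i => (inner_proj_left_of_mem _ hu).symm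
  refine ⟨fun i hi => ?_, ?_⟩
  · have hPx : proj U (x i) ∈ span ℝ (q '' ↑(Finset.Ico 1 k)) :=
      (hq k ⟨hk, by omega⟩).2 ▸ subset_span ⟨i, hi, rfl⟩
    have hu' : u ∈ (span ℝ (q '' ↑(Finset.Ico 1 k)))ᗮ :=
      mem_orthogonal_span_of_forall_inner_eq_zero fun _ ⟨l, hl, h⟩ => h ▸ hperp l hl
    rw [hxu]
    exact Submodule.inner_right_of_mem_orthogonal hPx hu'
  · obtain ⟨hON, hspan⟩ := hq (k + 1) ⟨by omega, le_rfl⟩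
    have hk' : k ∈ Finset.Ico 1 (k + 1) := Finset.mem_Ico.2 ⟨hk, k.lt_succ_self⟩
    have hPx : proj U (x k) ∈ span ℝ (q '' ↑(Finset.Ico 1 (k + 1))) :=
      hspan ▸ subset_span ⟨k, hk', rfl⟩
    have hqk : q k ∈ U := span_image_proj_le _ (hspan ▸ subset_span (Set.mem_image_of_mem q hk'))
    rw [hxu, eq_sum_inner_smul_of_mem_span hON hPx, sum_inner, Finset.sum_eq_single k]
    · rw [real_inner_smul_left, real_inner_comm, inner_proj_left_of_mem _ hqk, real_inner_comm]
    · intro l hl hlk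
      obtain ⟨hl1, hlk1⟩ := Finset.mem_Ico.1 hl
      rw [real_inner_smul_left, hperp l (Finset.mem_Ico.2 ⟨hl1, by omega⟩), mul_zero]
    · exact fun h => absurd hk' h

/-- In `span{q₁, …, q_k}` the weight on `x_k` drops below `⟨x_k, q_k⟩²` only at the cost of weight
on `x₁, …, x_{k-1}`, which the semigroup amplifies by the factor `θ = e^{δ τ}`. -/
lemma exists_sq_sub_div_le {k : ℕ} (hk : 1 ≤ k)
    (hq : IsOrthonormalization (fun i => proj U (x i)) q (k + 1)) :
    ∃ C, ∀ u ∈ span ℝ (q '' ↑(Finset.Ico 1 (k + 1))), ‖u‖ = 1 → ∀ θ > 0,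
      ⟪x k, q k⟫ ^ 2 - C / θ ≤ θ * ∑ i ∈ Finset.Ico 1 k, ⟪x i, u⟫ ^ 2 + ⟪x k, u⟫ ^ 2 := by
  obtain ⟨hON, hspan⟩ := hq (k + 1) ⟨by omega, le_rfl⟩
  have hspan_k := (hq k ⟨hk, by omega⟩).2
  rw [← Finset.insert_Ico_right_eq_Ico_add_one hk] at hON hspan ⊢
  have hkS : k ∉ Finset.Ico 1 k := by simp
  obtain ⟨c, hc, hcoer⟩ :=
    exists_pos_mul_norm_sq_le_sum_inner_sq (fun i => proj U (x i)) (Finset.Ico 1 k)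
  set M := ⟪x k, q k⟫
  set D := M ^ 2 + 2 * |M| * ‖x k‖
  refine ⟨D ^ 2 / (4 * c), fun u hu hu1 θ hθ => ?_⟩
  set a := ⟪q k, u⟫
  set v := u - a • q k
  have hv := sub_inner_smul_mem_span_of_orthonormal_insert hON hkS hu
  have hqk_perp := mem_orthogonal_span_of_orthonormal_insert hON hkS
  have hnorm := norm_sq_eq_inner_sq_add_of_orthonormal_insert hON hkS hu
  rw [hu1, one_pow] at hnorm
  have hvU : v ∈ U := span_image_proj_le _ (hspan_k ▸ hv)
  have hqkU : q k ∈ U :=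
    span_image_proj_le _ (hspan ▸ subset_span (Set.mem_image_of_mem q (Finset.mem_insert_self k _)))
  have hu_eq : u = a • q k + v := (add_sub_cancel _ u).symm
  have hxi : ∀ i ∈ Finset.Ico 1 k, ⟪x i, u⟫ = ⟪proj U (x i), v⟫ := fun i hi => by
    have hPx : proj U (x i) ∈ span ℝ (q '' ↑(Finset.Ico 1 k)) :=
      hspan_k ▸ subset_span ⟨i, hi, rfl⟩
    rw [hu_eq, inner_add_right, real_inner_smul_right, ← inner_proj_left_of_mem _ hqkU,
      Submodule.inner_right_of_mem_orthogonal hPx hqk_perp, inner_proj_left_of_mem _ hvU]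
    ring
  have hxk : ⟪x k, u⟫ = a * M + ⟪x k, v⟫ := by
    rw [hu_eq, inner_add_right, real_inner_smul_right]
  have hv1 : ‖v‖ ≤ 1 := by nlinarith [norm_nonneg v, sq_nonneg a]
  have hlow : c * ‖v‖ ^ 2 ≤ ∑ i ∈ Finset.Ico 1 k, ⟪x i, u⟫ ^ 2 := by
    rw [Finset.sum_congr rfl fun i hi => by rw [hxi i hi]]
    exact hcoer v (hspan_k ▸ hv)
  have hkk : M ^ 2 - D * ‖v‖ ≤ ⟪x k, u⟫ ^ 2 := hxk ▸
    sq_sub_mul_le_sq_add hnorm.symm (norm_nonneg v) hv1 (abs_real_inner_le_norm (x k) v)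
  have := mul_le_mul_sq_add_div (D := D) (t := ‖v‖) hc hθ
  nlinarith [mul_le_mul_of_nonneg_left hlow hθ.le]

end ProjectedOrthonormalization

/-- The hypotheses on `T_τ` at one fixed time `τ`, with `μ i = e^{-σ_i τ}`; `ρ` bounds `T` on the
orthogonal complement of the `η i`. -/
structure SpectralSplitting (T : E →L[ℝ] E) (r : ℕ) (η : ℕ → E) (μ : ℕ → ℝ) (ρ : ℝ) : Prop where
  inner_eq_ite : ∀ i ∈ Set.Icc 1 r, ∀ j ∈ Set.Icc 1 r, ⟪η i, η j⟫ = if i = j then (1 : ℝ) else 0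
  apply_eq : ∀ i ∈ Set.Icc 1 r, T (η i) = μ i • η i
  mapsTo_orthogonal : ∀ w ∈ (span ℝ (η '' Set.Icc 1 r))ᗮ, T w ∈ (span ℝ (η '' Set.Icc 1 r))ᗮ
  inner_apply_self_nonneg : ∀ u, 0 ≤ ⟪u, T u⟫
  inner_apply_self_le : ∀ w ∈ (span ℝ (η '' Set.Icc 1 r))ᗮ, ⟪w, T w⟫ ≤ ρ * ‖w‖ ^ 2

namespace SpectralSplitting

variable {T : E →L[ℝ] E} {r : ℕ} {η : ℕ → E} {μ : ℕ → ℝ} {ρ : ℝ}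

lemma orthonormal (h : SpectralSplitting T r η μ ρ) :
    Orthonormal ℝ (fun i : Finset.Icc 1 r => η i) :=
  orthonormal_Icc_of_inner_eq_ite h.inner_eq_ite

lemma sub_sum_mem_orthogonal (h : SpectralSplitting T r η μ ρ) (u : E) :
    u - ∑ i ∈ Finset.Icc 1 r, ⟪η i, u⟫ • η i ∈ (span ℝ (η '' Set.Icc 1 r))ᗮ :=
  Finset.coe_Icc 1 r ▸ sub_sum_inner_smul_mem_orthogonal h.orthonormal u

lemma inner_apply_self_eq (h : SpectralSplitting T r η μ ρ) (u : E) :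
    ⟪u, T u⟫ = ∑ i ∈ Finset.Icc 1 r, μ i * ⟪η i, u⟫ ^ 2 +
      ⟪u - ∑ i ∈ Finset.Icc 1 r, ⟪η i, u⟫ • η i, T (u - ∑ i ∈ Finset.Icc 1 r, ⟪η i, u⟫ • η i)⟫ := by
  set P := ∑ i ∈ Finset.Icc 1 r, ⟪η i, u⟫ • η i
  set w := u - P
  have hmem : ∀ i ∈ Finset.Icc 1 r, η i ∈ span ℝ (η '' Set.Icc 1 r) := fun i hi =>
    subset_span ⟨i, Finset.mem_Icc.1 hi, rfl⟩
  have hP : P ∈ span ℝ (η '' Set.Icc 1 r) :=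
    Submodule.sum_mem _ fun i hi => Submodule.smul_mem _ _ (hmem i hi)
  have hw : w ∈ (span ℝ (η '' Set.Icc 1 r))ᗮ := h.sub_sum_mem_orthogonal u
  have hTP : T P = ∑ i ∈ Finset.Icc 1 r, (μ i * ⟪η i, u⟫) • η i := by
    simp only [P, map_sum, map_smul]
    exact Finset.sum_congr rfl fun i hi => by
      rw [h.apply_eq i (Finset.mem_Icc.1 hi), smul_smul, mul_comm]
  have hTP_mem : T P ∈ span ℝ (η '' Set.Icc 1 r) := hTP ▸
    Submodule.sum_mem _ fun i hi => Submodule.smul_mem _ _ (hmem i hi)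
  have hu : u = P + w := (add_sub_cancel P u).symm
  rw [hu, map_add, inner_add_left, inner_add_right, inner_add_right,
    Submodule.inner_right_of_mem_orthogonal hP (h.mapsTo_orthogonal w hw),
    Submodule.inner_left_of_mem_orthogonal hTP_mem hw, ← hu, hTP,
    inner_sum_smul_sum_smul_of_orthonormal h.orthonormal]
  simp only [add_zero, ← add_assoc]
  congr 1
  exact Finset.sum_congr rfl fun i _ => by ring

lemma inner_apply_self_le_of_forall_inner_eq_zero (h : SpectralSplitting T r η μ ρ) {k : ℕ}
    (hk : k ∈ Finset.Icc 1 r) (hμ : ∀ i ∈ Finset.Icc 1 r, k < i → μ i ≤ ρ) {u : E}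
    (hu : ∀ i ∈ Finset.Icc 1 r, i < k → ⟪η i, u⟫ = 0) :
    ⟪u, T u⟫ ≤ μ k * ⟪η k, u⟫ ^ 2 + ρ * (‖u‖ ^ 2 - ⟪η k, u⟫ ^ 2) := by
  have hsum : ∑ i ∈ (Finset.Icc 1 r).erase k, μ i * ⟪η i, u⟫ ^ 2 ≤
      ∑ i ∈ (Finset.Icc 1 r).erase k, ρ * ⟪η i, u⟫ ^ 2 := by
    refine Finset.sum_le_sum fun i hi => ?_
    obtain ⟨hik, his⟩ := Finset.mem_erase.1 hi
    rcases hik.lt_or_gt with hlt | hgt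
    · simp [hu i his hlt]
    · exact mul_le_mul_of_nonneg_right (hμ i his hgt) (sq_nonneg _)
  have hres := h.inner_apply_self_le _ (h.sub_sum_mem_orthogonal u)
  have hdec := h.inner_apply_self_eq u
  have hnorm := norm_sq_eq_sum_inner_sq_add h.orthonormal u
  set w := u - ∑ i ∈ Finset.Icc 1 r, ⟪η i, u⟫ • η i
  rw [← Finset.add_sum_erase _ _ hk] at hdec hnorm
  rw [← Finset.mul_sum] at hsum
  have hρ : ρ * (‖u‖ ^ 2 - ⟪η k, u⟫ ^ 2) =
      ρ * ∑ i ∈ (Finset.Icc 1 r).erase k, ⟪η i, u⟫ ^ 2 + ρ * ‖w‖ ^ 2 := by rw [hnorm]; ring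
  linarith

lemma eigenvalue_nonneg (h : SpectralSplitting T r η μ ρ) {i : ℕ} (hi : i ∈ Set.Icc 1 r) :
    0 ≤ μ i := by
  have := h.inner_apply_self_nonneg (η i)
  rwa [h.apply_eq i hi, real_inner_smul_right, h.inner_eq_ite i hi i hi, if_pos rfl,
    mul_one] at this

lemma sum_le_inner_apply_self (h : SpectralSplitting T r η μ ρ) {t : Finset ℕ}
    (hts : t ⊆ Finset.Icc 1 r) (u : E) : ∑ i ∈ t, μ i * ⟪η i, u⟫ ^ 2 ≤ ⟪u, T u⟫ := by
  rw [h.inner_apply_self_eq]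
  have := h.inner_apply_self_nonneg (u - ∑ i ∈ Finset.Icc 1 r, ⟪η i, u⟫ • η i)
  have := Finset.sum_le_sum_of_subset_of_nonneg hts fun i hi _ =>
    mul_nonneg (h.eigenvalue_nonneg (Finset.mem_Icc.1 hi)) (sq_nonneg ⟪η i, u⟫)
  linarith

end SpectralSplitting

namespace RitzData

variable [CompleteSpace E] {Φ : Submodule ℝ E} {T : E →L[ℝ] E} {n r k : ℕ} {lam : ℕ → ℝ}
  {γ η q : ℕ → E} {μ : ℕ → ℝ} {ρ : ℝ}

lemma le_of_spectralSplitting (hR : RitzData Φ T n lam γ)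
    (hS : SpectralSplitting T r η μ ρ)
    (hq : IsOrthonormalization (fun i => proj Φ (η i)) q (k + 1)) (hk : k ∈ Set.Icc 1 n)
    (hkr : k ≤ r) (hμ : ∀ i ∈ Finset.Icc 1 r, k < i → μ i ≤ ρ) (hρ : 0 ≤ ρ) :
    lam k ≤ μ k * ⟪η k, q k⟫ ^ 2 + ρ := by
  classical
  have := hR.finiteDimensional
  obtain ⟨u, huΦ, hu1, hperp, hlam⟩ := hR.exists_le_inner_apply_self hk
    ((Finset.Ico 1 k).image q)
    (Finset.card_image_le.trans_lt (by rw [Nat.card_Ico]; exact Nat.sub_lt hk.1 one_pos))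
  obtain ⟨hlow, hkk⟩ := inner_eq_of_forall_inner_eq_zero hk.1 hq huΦ
    fun l hl => hperp _ (Finset.mem_image_of_mem q hl)
  have hkS : k ∈ Finset.Icc 1 r := Finset.mem_Icc.2 ⟨hk.1, hkr⟩
  have hup := hS.inner_apply_self_le_of_forall_inner_eq_zero hkS hμ
    fun i hi hik => hlow i (Finset.mem_Ico.2 ⟨(Finset.mem_Icc.1 hi).1, hik⟩)
  have hqk : ⟪q k, u⟫ ^ 2 ≤ 1 := by
    have := abs_real_inner_le_norm (q k) u
    rw [hu1, (hq (k + 1) ⟨by omega, le_rfl⟩).1.1 ⟨k, Finset.mem_Ico.2 ⟨hk.1, k.lt_succ_self⟩⟩,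
      one_mul] at this
    exact (sq_le_one_iff_abs_le_one _).2 this
  have hμk := hS.eigenvalue_nonneg (Finset.mem_Icc.1 hkS)
  rw [hkk, hu1, mul_pow] at hup
  nlinarith [mul_le_mul_of_nonneg_left hqk (mul_nonneg hμk (sq_nonneg ⟪η k, q k⟫)),
    mul_nonneg hρ (mul_nonneg (sq_nonneg ⟪η k, q k⟫) (sq_nonneg ⟪q k, u⟫))]

lemma mul_sub_le_of_spectralSplitting (hR : RitzData Φ T n lam γ)
    (hS : SpectralSplitting T r η μ ρ)
    (hq : IsOrthonormalization (fun i => proj Φ (η i)) q (k + 1)) (hk : 1 ≤ k) (hkr : k ≤ r)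
    {C : ℝ} (hC : ∀ u ∈ span ℝ (q '' ↑(Finset.Ico 1 (k + 1))), ‖u‖ = 1 → ∀ θ > 0,
      ⟪η k, q k⟫ ^ 2 - C / θ ≤ θ * ∑ i ∈ Finset.Ico 1 k, ⟪η i, u⟫ ^ 2 + ⟪η k, u⟫ ^ 2)
    {θ : ℝ} (hθ : 0 < θ) (hμ : ∀ i ∈ Finset.Ico 1 k, θ * μ k ≤ μ i) :
    μ k * (⟪η k, q k⟫ ^ 2 - C / θ) ≤ lam k := by
  have := hR.finiteDimensional
  obtain ⟨hON, hspan⟩ := hq (k + 1) ⟨by omega, le_rfl⟩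
  have hVΦ : span ℝ (q '' ↑(Finset.Ico 1 (k + 1))) ≤ Φ := hspan ▸ span_image_proj_le _
  have hV : k ≤ Module.finrank ℝ (span ℝ (q '' ↑(Finset.Ico 1 (k + 1)))) := by
    rw [finrank_span_eq_card_of_orthonormal hON, Nat.card_Ico, Nat.add_sub_cancel]
  obtain ⟨u, huV, hu1, hlam⟩ := hR.exists_inner_apply_self_le hk hVΦ hV
  have hsub : Finset.Ico 1 (k + 1) ⊆ Finset.Icc 1 r := fun i hi => by
    obtain ⟨h1, h2⟩ := Finset.mem_Ico.1 hi; exact Finset.mem_Icc.2 ⟨h1, by omega⟩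
  have hsum := hS.sum_le_inner_apply_self hsub u
  rw [Finset.sum_Ico_succ_top hk] at hsum
  have hθsum : θ * μ k * ∑ i ∈ Finset.Ico 1 k, ⟪η i, u⟫ ^ 2 ≤
      ∑ i ∈ Finset.Ico 1 k, μ i * ⟪η i, u⟫ ^ 2 := by
    rw [Finset.mul_sum]
    exact Finset.sum_le_sum fun i hi => mul_le_mul_of_nonneg_right (hμ i hi) (sq_nonneg _)
  have hμk := hS.eigenvalue_nonneg ⟨hk, hkr⟩
  nlinarith [mul_le_mul_of_nonneg_left (hC u huV hu1 θ hθ) hμk]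

end RitzData

lemma tendsto_mul_exp_of_le_of_le {g : ℝ → ℝ} {a s s' C δ : ℝ} (hδ : 0 < δ) (hs : s < s')
    (hlow : ∀ τ > 0, Real.exp (-s * τ) * (a - C / Real.exp (δ * τ)) ≤ g τ)
    (hup : ∀ τ > 0, g τ ≤ Real.exp (-s * τ) * a + Real.exp (-s' * τ)) :
    Tendsto (fun τ => g τ * Real.exp (s * τ)) atTop (nhds a) := by
  have hexp : ∀ τ, Real.exp (-s * τ) * Real.exp (s * τ) = 1 := fun τ => by
    rw [← Real.exp_add, neg_mul, neg_add_cancel, Real.exp_zero]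
  have hdecay : ∀ {ε : ℝ} (D : ℝ), 0 < ε →
      Tendsto (fun τ : ℝ => D * Real.exp (-(ε * τ))) atTop (nhds 0) := fun D hε => by
    simpa using (Real.tendsto_exp_neg_atTop_nhds_zero.comp
      (tendsto_id.const_mul_atTop hε)).const_mul D
  refine tendsto_of_tendsto_of_tendsto_of_le_of_le'
    (by simpa using tendsto_const_nhds.sub (hdecay C hδ))
    (by simpa using tendsto_const_nhds.add (hdecay 1 (sub_pos.2 hs))) ?_ ?_ <;>
    filter_upwards [eventually_gt_atTop 0] with τ hτ
  · calc a - C * Real.exp (-(δ * τ))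
        = Real.exp (-s * τ) * (a - C / Real.exp (δ * τ)) * Real.exp (s * τ) := by
          rw [mul_right_comm, hexp, one_mul, Real.exp_neg, div_eq_mul_inv]
      _ ≤ g τ * Real.exp (s * τ) := by gcongr; exact hlow τ hτ
  · calc g τ * Real.exp (s * τ)
        ≤ (Real.exp (-s * τ) * a + Real.exp (-s' * τ)) * Real.exp (s * τ) := by
          gcongr; exact hup τ hτ
      _ = a + Real.exp (-((s' - s) * τ)) := by
        rw [add_mul, mul_right_comm, hexp, one_mul, ← Real.exp_add]
        ring_nf

end

theorem stmt5_general {H : Type*} [NormedAddCommGroup H] [InnerProductSpace ℝ H] [CompleteSpace H]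
    (T : ℝ → H →L[ℝ] H)
    (hTpos : ∀ τ > (0 : ℝ), ∀ u : H, 0 ≤ ⟪u, T τ u⟫)
    (r : ℕ) (η : ℕ → H) (σ : ℕ → ℝ)
    (hη : ∀ i ∈ Set.Icc 1 r, ∀ j ∈ Set.Icc 1 r, ⟪η i, η j⟫ = if i = j then (1 : ℝ) else 0)
    (hσmono : ∀ i ∈ Set.Icc 1 (r + 1), ∀ j ∈ Set.Icc 1 (r + 1), i ≤ j → σ i ≤ σ j)
    (hTeig : ∀ τ > (0 : ℝ), ∀ i ∈ Set.Icc 1 r, T τ (η i) = Real.exp (-σ i * τ) • η i)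
    (hTinv : ∀ τ > (0 : ℝ), ∀ w ∈ (span ℝ (η '' Set.Icc 1 r))ᗮ,
      T τ w ∈ (span ℝ (η '' Set.Icc 1 r))ᗮ)
    (hTres : ∀ τ > (0 : ℝ), ∀ w ∈ (span ℝ (η '' Set.Icc 1 r))ᗮ,
      ⟪w, T τ w⟫ ≤ Real.exp (-σ (r + 1) * τ) * ‖w‖ ^ 2)
    (n : ℕ) (Φ : Submodule ℝ H) (hΦfd : FiniteDimensional ℝ Φ)
    (lam : ℝ → ℕ → ℝ)
    (hritz : ∀ τ > (0 : ℝ), ∃ γ : ℕ → H, RitzData Φ (T τ) n (lam τ) γ)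
    (hlin : LinearIndependent ℝ (fun i : Set.Icc 1 (min n r) => proj Φ (η i.1)))
    (q : ℕ → H)
    (hq : ∀ i ∈ Set.Icc 1 (min n r),
      q i = ‖proj Φ (η i) - ∑ l ∈ Finset.Ico 1 i, ⟪q l, η i⟫ • q l‖⁻¹ •
            (proj Φ (η i) - ∑ l ∈ Finset.Ico 1 i, ⟪q l, η i⟫ • q l))
    (k : ℕ) (hk1 : 1 ≤ k) (hkp : k ≤ min n r)
    (hgap₁ : 2 ≤ k → σ (k - 1) < σ k) (hgap₂ : σ k < σ (k + 1)) :
    Filter.Tendsto (fun τ : ℝ => lam τ k * Real.exp (σ k * τ)) Filter.atTop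
      (nhds (⟪η k, q k⟫ ^ 2)) := by
  obtain ⟨hkn, hkr⟩ := le_min_iff.1 hkp
  have hσ : ∀ i j, 1 ≤ i → i ≤ j → j ≤ r + 1 → σ i ≤ σ j := fun i j hi hij hj =>
    hσmono i ⟨hi, hij.trans hj⟩ j ⟨hi.trans hij, hj⟩ hij
  have hGS : IsOrthonormalization (fun i => proj Φ (η i)) q (k + 1) :=
    (isOrthonormalization_of_gramSchmidt (gramSchmidt_proj hq) hlin).mono (by omega)
  have hS : ∀ τ > 0, SpectralSplitting (T τ) r η (fun i => Real.exp (-σ i * τ))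
      (Real.exp (-σ (k + 1) * τ)) := fun τ hτ =>
    ⟨hη, hTeig τ hτ, hTinv τ hτ, hTpos τ hτ, fun w hw => (hTres τ hτ w hw).trans <| by
      gcongr; linarith [hσ (k + 1) (r + 1) (by omega) (by omega) le_rfl]⟩
  obtain ⟨C, hC⟩ := exists_sq_sub_div_le hk1 hGS
  obtain ⟨δ, hδ, hδσ⟩ : ∃ δ > 0, ∀ i ∈ Finset.Ico 1 k, σ i + δ ≤ σ k := by
    rcases hk1.eq_or_lt with rfl | hk2
    · exact ⟨1, one_pos, by simp⟩
    refine ⟨σ k - σ (k - 1), sub_pos.2 (hgap₁ hk2), fun i hi => ?_⟩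
    obtain ⟨hi1, hik⟩ := Finset.mem_Ico.1 hi
    linarith [hσ i (k - 1) hi1 (by omega) (by omega)]
  refine tendsto_mul_exp_of_le_of_le (C := C) hδ hgap₂ (fun τ hτ => ?_) (fun τ hτ => ?_) <;>
    obtain ⟨γ, hR⟩ := hritz τ hτ
  · refine hR.mul_sub_le_of_spectralSplitting (hS τ hτ) hGS hk1 hkr hC (Real.exp_pos _)
      fun i hi => ?_
    rw [← Real.exp_add]
    exact Real.exp_le_exp.2 (by nlinarith [hδσ i hi])
  · refine hR.le_of_spectralSplitting (hS τ hτ) hGS ⟨hk1, hkn⟩ hkr (fun i hi hki => ?_)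
      (Real.exp_pos _).le
    exact Real.exp_le_exp.2 (by nlinarith [hσ (k + 1) i (by omega) hki (by simp at hi; omega)])

/-- Long-lag-time limit of Ritz values: if `σ_{k−1} < σ_k < σ_{k+1}`
then `λ_k^τ e^{σ_k τ} → ⟨η_k, q_k⟩²` as `τ → ∞`. -/
theorem stmt5 {H : Type*} [NormedAddCommGroup H] [InnerProductSpace ℝ H] [CompleteSpace H]
    (T : ℝ → H →L[ℝ] H)
    (hTsa : ∀ τ > (0 : ℝ), ∀ x y : H, ⟪T τ x, y⟫ = ⟪x, T τ y⟫)
    (hTpos : ∀ τ > (0 : ℝ), ∀ u : H, 0 ≤ ⟪u, T τ u⟫)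
    (r : ℕ) (hr : 1 ≤ r) (η : ℕ → H) (σ : ℕ → ℝ)
    (hη : ∀ i ∈ Set.Icc 1 r, ∀ j ∈ Set.Icc 1 r, ⟪η i, η j⟫ = if i = j then (1 : ℝ) else 0)
    (hσ0 : 0 ≤ σ 1)
    (hσmono : ∀ i ∈ Set.Icc 1 (r + 1), ∀ j ∈ Set.Icc 1 (r + 1), i ≤ j → σ i ≤ σ j)
    (hTeig : ∀ τ > (0 : ℝ), ∀ i ∈ Set.Icc 1 r, T τ (η i) = Real.exp (-σ i * τ) • η i)
    (hTinv : ∀ τ > (0 : ℝ), ∀ w ∈ (span ℝ (η '' Set.Icc 1 r))ᗮ,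
      T τ w ∈ (span ℝ (η '' Set.Icc 1 r))ᗮ)
    (hTres : ∀ τ > (0 : ℝ), ∀ w ∈ (span ℝ (η '' Set.Icc 1 r))ᗮ,
      ⟪w, T τ w⟫ ≤ Real.exp (-σ (r + 1) * τ) * ‖w‖ ^ 2)
    (n : ℕ) (Φ : Submodule ℝ H) (hΦfd : FiniteDimensional ℝ Φ) (hΦn : Module.finrank ℝ Φ = n)
    (lam : ℝ → ℕ → ℝ)
    (hritz : ∀ τ > (0 : ℝ), ∃ γ : ℕ → H, RitzData Φ (T τ) n (lam τ) γ)
    (hlin : LinearIndependent ℝ (fun i : Set.Icc 1 (min n r) => proj Φ (η i.1)))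
    (q : ℕ → H)
    (hq : ∀ i ∈ Set.Icc 1 (min n r),
      q i = ‖proj Φ (η i) - ∑ l ∈ Finset.Ico 1 i, ⟪q l, η i⟫ • q l‖⁻¹ •
            (proj Φ (η i) - ∑ l ∈ Finset.Ico 1 i, ⟪q l, η i⟫ • q l))
    (k : ℕ) (hk1 : 1 ≤ k) (hkp : k ≤ min n r)
    (hgap₁ : 2 ≤ k → σ (k - 1) < σ k) (hgap₂ : σ k < σ (k + 1)) :
    Filter.Tendsto (fun τ : ℝ => lam τ k * Real.exp (σ k * τ)) Filter.atTop
      (nhds (⟪η k, q k⟫ ^ 2)) :=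
  stmt5_general T hTpos r η σ hη hσmono hTeig hTinv hTres n Φ hΦfd lam hritz hlin q hq k hk1 hkp
    hgap₁ hgap₂

end
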